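/- (Theorem 1, deterministic form on the concentration event.) Let F : ℝ^d → ℝ be differentiable with gradient ∇F, μ-strongly convex with L-Lipschitz gradient (0 < μ ≤ L), and let θ* satisfy ∇F(θ*) = 0. Let Θ ⊆ ℝ^d, λ > 0, Λ ≥ 0, Γ ≥ 0, and let ḡ : ℝ^d → ℝ^d (the trusted-dataset empirical gradient) satisfy ‖ḡ(θ) − ∇F(θ)‖ ≤ 8Λ‖θ − θ*‖ + 4Γ for every θ ∈ Θ. Let 0 < η ≤ 2/(μ + L) and set q = 1 − (√(1 − 2ημL/(μ + L)) + ηLλ + 8ηΛ(λ + 1)); assume q > 0. Let (θ^t)_{t≥0} be a sequence in Θ with θ^{t+1} = θ^t − η g^t for some g^t ∈ ℝ^d satisfying the acceptance criterion ‖g^t − ḡ(θ^t)‖ ≤ λ‖ḡ(θ^t)‖ for every t. Then for every t ≥ 0: ‖θ^t − θ*‖ ≤ (1 − q)^t ‖θ^0 − θ*‖ + 4ηΓ(λ + 1)/q. -/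

import Mathlib

/-!
For a `μ`-strongly convex function with `L`-Lipschitz gradient, Nesterov's inequality
`μL‖x - y‖² + ‖∇F x - ∇F y‖² ≤ (μ + L)⟪∇F x - ∇F y, x - y⟫` makes the exact gradient step a
contraction towards `θ*` with factor `√(1 - 2ημL/(μ + L))` whenever `η ≤ 2/(μ + L)`.
An accepted update deviates from `∇F(θ)` by at most `λ‖∇F(θ)‖ + (λ + 1)‖ḡ(θ) - ∇F(θ)‖`,
which the hypothesis on `ḡ` and `‖∇F(θ)‖ ≤ L‖θ - θ*‖` turn into a bound affine in
`‖θ - θ*‖`. Hence `‖θ^{t+1} - θ*‖ ≤ (1 - q)‖θ^t - θ*‖ + 4ηΓ(λ + 1)`, and unrolling this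
recursion gives the claim.
-/

open RealInnerProductSpace

section GradientInequalities

variable {E : Type*} [NormedAddCommGroup E] [InnerProductSpace ℝ E] {f : E → ℝ} {f' : E → E}

theorem HasGradientAt.hasDerivAt_comp_add_smul [CompleteSpace E] {g x v : E} {t : ℝ}
    (hf : HasGradientAt f g (x + t • v)) :
    HasDerivAt (fun s : ℝ => f (x + s • v)) ⟪g, v⟫ t := by
  have hline : HasDerivAt (fun s : ℝ => x + s • v) v t := by
    simpa using ((hasDerivAt_id t).smul_const v).const_add x
  simpa [InnerProductSpace.toDual_apply_apply, Function.comp_def] using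
    (hasGradientAt_iff_hasFDerivAt.mp hf).comp_hasDerivAt t hline

theorem le_add_inner_add_sq_of_lipschitz_gradient [CompleteSpace E] {K : ℝ}
    (hf : ∀ x, HasGradientAt f (f' x) x) (hlip : ∀ x y, ‖f' x - f' y‖ ≤ K * ‖x - y‖)
    (x y : E) : f y ≤ f x + ⟪f' x, y - x⟫ + K / 2 * ‖y - x‖ ^ 2 := by
  set v := y - x
  set φ : ℝ → ℝ := fun s => f (x + s • v) - s * ⟪f' x, v⟫ - K / 2 * s ^ 2 * ‖v‖ ^ 2
  have hφ : ∀ s : ℝ, HasDerivAt φ (⟪f' (x + s • v) - f' x, v⟫ - K * s * ‖v‖ ^ 2) s := by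
    intro s
    refine (((hf (x + s • v)).hasDerivAt_comp_add_smul.sub
      ((hasDerivAt_id s).mul_const ⟪f' x, v⟫)).sub
      (((hasDerivAt_pow 2 s).const_mul (K / 2)).mul_const (‖v‖ ^ 2))).congr_deriv ?_
    rw [inner_sub_left]
    push_cast
    ring
  have hanti : AntitoneOn φ (Set.Icc 0 1) := by
    refine antitoneOn_of_deriv_nonpos (convex_Icc 0 1)
      (fun s _ => (hφ s).continuousAt.continuousWithinAt)
      (fun s _ => (hφ s).differentiableAt.differentiableWithinAt) fun s hs => ?_
    rw [interior_Icc] at hs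
    rw [(hφ s).deriv, sub_nonpos]
    calc ⟪f' (x + s • v) - f' x, v⟫ ≤ ‖f' (x + s • v) - f' x‖ * ‖v‖ := real_inner_le_norm _ _
      _ ≤ K * ‖x + s • v - x‖ * ‖v‖ := by gcongr; exact hlip _ _
      _ = K * s * ‖v‖ ^ 2 := by
        rw [add_sub_cancel_left, norm_smul, Real.norm_of_nonneg hs.1.le]
        ring
  have h01 := hanti (Set.left_mem_Icc.mpr zero_le_one) (Set.right_mem_Icc.mpr zero_le_one)
    zero_le_one
  simp only [φ, v, one_smul, add_sub_cancel, zero_smul, add_zero] at h01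
  linarith

/-- The minimiser of the quadratic upper bound at `y`, namely `y - K⁻¹ (f' y - f' x)`, is
compared with the supporting hyperplane at `x`. -/
theorem add_inner_add_sq_norm_sub_le_of_convex_of_smooth {K : ℝ} (hK : 0 < K)
    (hconv : ∀ a b, f a + ⟪f' a, b - a⟫ ≤ f b)
    (hsmooth : ∀ a b, f b ≤ f a + ⟪f' a, b - a⟫ + K / 2 * ‖b - a‖ ^ 2) (x y : E) :
    f x + ⟪f' x, y - x⟫ + 1 / (2 * K) * ‖f' y - f' x‖ ^ 2 ≤ f y := by
  set Δ := f' y - f' x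
  have hlow := hconv x (y - K⁻¹ • Δ)
  have hup := hsmooth y (y - K⁻¹ • Δ)
  have hΔ : ⟪f' y, Δ⟫ - ⟪f' x, Δ⟫ = ‖Δ‖ ^ 2 := by
    rw [← inner_sub_left, real_inner_self_eq_norm_sq]
  rw [sub_sub_cancel_left, norm_neg, norm_smul, Real.norm_of_nonneg (inv_nonneg.mpr hK.le),
    inner_neg_right, real_inner_smul_right] at hup
  rw [sub_right_comm, inner_sub_right, real_inner_smul_right] at hlow
  have hK' : K ≠ 0 := hK.ne'
  have hcancel : K / 2 * (K⁻¹ * ‖Δ‖) ^ 2 = 1 / (2 * K) * ‖Δ‖ ^ 2 := by field_simp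
  have hsplit : K⁻¹ * ⟪f' y, Δ⟫ - K⁻¹ * ⟪f' x, Δ⟫ = 2 * (1 / (2 * K) * ‖Δ‖ ^ 2) := by
    rw [← mul_sub, hΔ]
    field_simp
  rw [hcancel] at hup
  linarith

theorem sq_norm_sub_le_mul_inner_of_convex_of_smooth {K : ℝ} (hK : 0 < K)
    (hconv : ∀ a b, f a + ⟪f' a, b - a⟫ ≤ f b)
    (hsmooth : ∀ a b, f b ≤ f a + ⟪f' a, b - a⟫ + K / 2 * ‖b - a‖ ^ 2) (x y : E) :
    ‖f' x - f' y‖ ^ 2 ≤ K * ⟪f' x - f' y, x - y⟫ := by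
  have hxy := add_inner_add_sq_norm_sub_le_of_convex_of_smooth hK hconv hsmooth x y
  have hyx := add_inner_add_sq_norm_sub_le_of_convex_of_smooth hK hconv hsmooth y x
  rw [norm_sub_rev] at hxy
  have hinner : ⟪f' x - f' y, x - y⟫ = -⟪f' x, y - x⟫ - ⟪f' y, x - y⟫ := by
    rw [← neg_sub x y, inner_neg_right, inner_sub_left]
    ring
  have hsum : 1 / (2 * K) * ‖f' x - f' y‖ ^ 2 * 2 * K = ‖f' x - f' y‖ ^ 2 := by
    field_simp
  nlinarith

theorem mul_sq_norm_sub_le_inner_of_strongConvex {μ : ℝ}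
    (hstrong : ∀ a b, f a + ⟪f' a, b - a⟫ + μ / 2 * ‖b - a‖ ^ 2 ≤ f b) (x y : E) :
    μ * ‖x - y‖ ^ 2 ≤ ⟪f' x - f' y, x - y⟫ := by
  have hxy := hstrong x y
  have hyx := hstrong y x
  rw [norm_sub_rev, ← neg_sub x y, inner_neg_right] at hxy
  rw [inner_sub_left]
  linarith

/-- Nesterov's Theorem 2.1.12. For `μ < L` it is co-coercivity of the gradient of the convex
function `f - μ/2 ‖·‖²`, which is `(L - μ)`-smooth. -/
theorem mul_mul_sq_norm_sub_add_sq_norm_sub_le_inner [CompleteSpace E] {μ L : ℝ}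
    (hf : ∀ x, HasGradientAt f (f' x) x) (hμ : 0 < μ) (hμL : μ ≤ L)
    (hstrong : ∀ a b, f a + ⟪f' a, b - a⟫ + μ / 2 * ‖b - a‖ ^ 2 ≤ f b)
    (hlip : ∀ a b, ‖f' a - f' b‖ ≤ L * ‖a - b‖) (x y : E) :
    μ * L * ‖x - y‖ ^ 2 + ‖f' x - f' y‖ ^ 2 ≤ (μ + L) * ⟪f' x - f' y, x - y⟫ := by
  have hmono := mul_sq_norm_sub_le_inner_of_strongConvex hstrong x y
  rcases hμL.eq_or_lt with rfl | hlt
  · have hsq : ‖f' x - f' y‖ ^ 2 ≤ (μ * ‖x - y‖) ^ 2 := by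
      gcongr
      exact hlip x y
    nlinarith
  set g : E → ℝ := fun a => f a - μ / 2 * ‖a‖ ^ 2
  set g' : E → E := fun a => f' a - μ • a
  have hgap : ∀ a b, g b - (g a + ⟪g' a, b - a⟫) =
      f b - (f a + ⟪f' a, b - a⟫) - μ / 2 * ‖b - a‖ ^ 2 := by
    intro a b
    simp only [g, g', inner_sub_left, real_inner_smul_left, norm_sub_sq_real, inner_sub_right,
      real_inner_self_eq_norm_sq, real_inner_comm a b]
    ring
  have hconv : ∀ a b, g a + ⟪g' a, b - a⟫ ≤ g b := fun a b => by
    linarith [hgap a b, hstrong a b]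
  have hsmooth : ∀ a b, g b ≤ g a + ⟪g' a, b - a⟫ + (L - μ) / 2 * ‖b - a‖ ^ 2 := fun a b => by
    linarith [hgap a b, le_add_inner_add_sq_of_lipschitz_gradient hf hlip a b]
  have hco := sq_norm_sub_le_mul_inner_of_convex_of_smooth (sub_pos.mpr hlt) hconv hsmooth x y
  have hshift : g' x - g' y = (f' x - f' y) - μ • (x - y) := by
    simp only [g', smul_sub]
    abel
  have hnorm : ‖(f' x - f' y) - μ • (x - y)‖ ^ 2 =
      ‖f' x - f' y‖ ^ 2 - 2 * μ * ⟪f' x - f' y, x - y⟫ + μ ^ 2 * ‖x - y‖ ^ 2 := by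
    rw [norm_sub_sq_real, real_inner_smul_right, norm_smul, Real.norm_of_nonneg hμ.le]
    ring
  have hinner : ⟪(f' x - f' y) - μ • (x - y), x - y⟫ = ⟪f' x - f' y, x - y⟫ - μ * ‖x - y‖ ^ 2 := by
    rw [inner_sub_left, real_inner_smul_left, real_inner_self_eq_norm_sq]
  rw [hshift, hnorm, hinner] at hco
  nlinarith

theorem norm_sub_smul_le_sqrt_mul_norm {μ L η : ℝ} {y w : E} (hμL : 0 < μ + L) (hη0 : 0 ≤ η)
    (hη : η ≤ 2 / (μ + L)) (hcoer : μ * L * ‖y‖ ^ 2 + ‖w‖ ^ 2 ≤ (μ + L) * ⟪w, y⟫) :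
    ‖y - η • w‖ ≤ Real.sqrt (1 - 2 * η * μ * L / (μ + L)) * ‖y‖ := by
  have hη' : η * (μ + L) ≤ 2 := (le_div_iff₀ hμL).mp hη
  have hsq : ‖y - η • w‖ ^ 2 ≤ (1 - 2 * η * μ * L / (μ + L)) * ‖y‖ ^ 2 := by
    rw [norm_sub_sq_real, real_inner_smul_right, norm_smul, Real.norm_of_nonneg hη0,
      real_inner_comm, ← mul_le_mul_iff_of_pos_right hμL]
    have hexpand : (1 - 2 * η * μ * L / (μ + L)) * ‖y‖ ^ 2 * (μ + L) =
        (μ + L - 2 * η * μ * L) * ‖y‖ ^ 2 := by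
      field_simp
    rw [hexpand]
    nlinarith [mul_nonneg hη0 (sq_nonneg ‖w‖), mul_nonneg hη0 (sub_nonneg.mpr hη')]
  calc ‖y - η • w‖ = Real.sqrt (‖y - η • w‖ ^ 2) := (Real.sqrt_sq (norm_nonneg _)).symm
    _ ≤ Real.sqrt ((1 - 2 * η * μ * L / (μ + L)) * ‖y‖ ^ 2) := Real.sqrt_le_sqrt hsq
    _ = Real.sqrt (1 - 2 * η * μ * L / (μ + L)) * ‖y‖ := by
      rw [Real.sqrt_mul' _ (sq_nonneg _), Real.sqrt_sq (norm_nonneg _)]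

end GradientInequalities

theorem norm_sub_le_of_norm_sub_le_mul_norm {G : Type*} [SeminormedAddCommGroup G]
    {g gbar v : G} {lam : ℝ} (hlam : 0 ≤ lam) (h : ‖g - gbar‖ ≤ lam * ‖gbar‖) :
    ‖g - v‖ ≤ lam * ‖v‖ + (lam + 1) * ‖gbar - v‖ := by
  have hgbar : ‖gbar‖ ≤ ‖v‖ + ‖gbar - v‖ := norm_le_norm_add_norm_sub' gbar v
  calc ‖g - v‖ ≤ ‖g - gbar‖ + ‖gbar - v‖ := norm_sub_le_norm_sub_add_norm_sub _ _ _
    _ ≤ lam * (‖v‖ + ‖gbar - v‖) + ‖gbar - v‖ := by gcongr; exact h.trans (by gcongr)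
    _ = lam * ‖v‖ + (lam + 1) * ‖gbar - v‖ := by ring

theorem norm_sub_smul_sub_le {G : Type*} [SeminormedAddCommGroup G] [NormedSpace ℝ G]
    {x z v w : G} {η : ℝ} (hη : 0 ≤ η) :
    ‖x - η • w - z‖ ≤ ‖x - z - η • v‖ + η * ‖w - v‖ := by
  calc ‖x - η • w - z‖ = ‖(x - z - η • v) - η • (w - v)‖ := by congr 1; module
    _ ≤ ‖x - z - η • v‖ + ‖η • (w - v)‖ := norm_sub_le _ _
    _ = ‖x - z - η • v‖ + η * ‖w - v‖ := by rw [norm_smul_of_nonneg hη]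

theorem le_pow_mul_add_div_of_le_mul_add {u : ℕ → ℝ} {a b : ℝ} (ha0 : 0 ≤ a) (ha1 : a < 1)
    (hb : 0 ≤ b) (h : ∀ t, u (t + 1) ≤ a * u t + b) (t : ℕ) :
    u t ≤ a ^ t * u 0 + b / (1 - a) := by
  have h1a : 1 - a ≠ 0 := (sub_pos.mpr ha1).ne'
  induction t with
  | zero => simpa using div_nonneg hb (sub_pos.mpr ha1).le
  | succ t ih =>
    calc u (t + 1) ≤ a * u t + b := h t
      _ ≤ a * (a ^ t * u 0 + b / (1 - a)) + b := by gcongr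
      _ = a ^ (t + 1) * u 0 + b / (1 - a) := by field_simp; ring

/-- Theorem 1 of the paper (deterministic form, on the concentration event):
if the trusted-dataset empirical gradient `gbar` satisfies
`‖gbar(θ) − ∇F(θ)‖ ≤ 8Λ‖θ − θ*‖ + 4Γ` on `Θ`, each accepted update `g t` satisfies the
AFLGuard acceptance criterion, and
`q = 1 − (√(1 − 2ημL/(μ+L)) + ηLλ + 8ηΛ(λ+1)) > 0`, then AFLGuard's iterates satisfy
`‖θ^t − θ*‖ ≤ (1 − q)^t ‖θ^0 − θ*‖ + 4ηΓ(λ+1)/q`. -/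
theorem aflguard_convergence
    (d : ℕ) (F : EuclideanSpace ℝ (Fin d) → ℝ)
    (gradF : EuclideanSpace ℝ (Fin d) → EuclideanSpace ℝ (Fin d))
    (hdiff : ∀ θ, HasGradientAt F (gradF θ) θ)
    (μ L : ℝ) (hμ : 0 < μ) (hμL : μ ≤ L)
    (hstrong : ∀ θ θ' : EuclideanSpace ℝ (Fin d),
      F θ + ⟪gradF θ, θ' - θ⟫ + μ / 2 * ‖θ' - θ‖ ^ 2 ≤ F θ')
    (hlip : ∀ θ θ' : EuclideanSpace ℝ (Fin d),
      ‖gradF θ - gradF θ'‖ ≤ L * ‖θ - θ'‖)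
    (θstar : EuclideanSpace ℝ (Fin d)) (hθstar : gradF θstar = 0)
    (Θ : Set (EuclideanSpace ℝ (Fin d)))
    (lam Lambda Gamma : ℝ) (hlam : 0 < lam) (hLambda : 0 ≤ Lambda) (hGamma : 0 ≤ Gamma)
    (gbar : EuclideanSpace ℝ (Fin d) → EuclideanSpace ℝ (Fin d))
    (hgbar : ∀ θ ∈ Θ, ‖gbar θ - gradF θ‖ ≤ 8 * Lambda * ‖θ - θstar‖ + 4 * Gamma)
    (η : ℝ) (hη0 : 0 < η) (hη : η ≤ 2 / (μ + L))
    (q : ℝ)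
    (hq : q = 1 - (Real.sqrt (1 - 2 * η * μ * L / (μ + L)) + η * L * lam
      + 8 * η * Lambda * (lam + 1)))
    (hqpos : 0 < q)
    (θseq : ℕ → EuclideanSpace ℝ (Fin d)) (hmem : ∀ t, θseq t ∈ Θ)
    (g : ℕ → EuclideanSpace ℝ (Fin d))
    (hupdate : ∀ t, θseq (t + 1) = θseq t - η • g t)
    (haccept : ∀ t, ‖g t - gbar (θseq t)‖ ≤ lam * ‖gbar (θseq t)‖) :
    ∀ t : ℕ, ‖θseq t - θstar‖ ≤
      (1 - q) ^ t * ‖θseq 0 - θstar‖ + 4 * η * Gamma * (lam + 1) / q := by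
  have hL : 0 < L := hμ.trans_le hμL
  have hstep : ∀ t, ‖θseq (t + 1) - θstar‖ ≤
      (1 - q) * ‖θseq t - θstar‖ + 4 * η * Gamma * (lam + 1) := by
    intro t
    rw [hupdate t]
    set x := θseq t
    set r := ‖x - θstar‖
    have hcoer := mul_mul_sq_norm_sub_add_sq_norm_sub_le_inner hdiff hμ hμL hstrong hlip x θstar
    rw [hθstar, sub_zero] at hcoer
    have hexact := norm_sub_smul_le_sqrt_mul_norm (by linarith) hη0.le hη hcoer
    have hgrad : ‖gradF x‖ ≤ L * r := by simpa [hθstar] using hlip x θstar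
    have herr := norm_sub_le_of_norm_sub_le_mul_norm (v := gradF x) hlam.le (haccept t)
    calc ‖x - η • g t - θstar‖ ≤ ‖x - θstar - η • gradF x‖ + η * ‖g t - gradF x‖ :=
          norm_sub_smul_sub_le hη0.le
      _ ≤ Real.sqrt (1 - 2 * η * μ * L / (μ + L)) * r
            + η * (lam * (L * r) + (lam + 1) * (8 * Lambda * r + 4 * Gamma)) := by
          gcongr
          exact herr.trans (by gcongr; exact hgbar x (hmem t))
      _ = (1 - q) * r + 4 * η * Gamma * (lam + 1) := by
          rw [hq]
          ring
  have hcontr : 0 ≤ 1 - q := by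
    rw [hq, sub_sub_cancel]
    have := Real.sqrt_nonneg (1 - 2 * η * μ * L / (μ + L))
    positivity
  intro t
  simpa only [sub_sub_cancel] using
    le_pow_mul_add_div_of_le_mul_add (u := fun t => ‖θseq t - θstar‖) hcontr (by linarith)
      (by positivity) hstep t
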